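/- The hard functional thresholding rule does not satisfy condition (i) for any constant: let H be a real normed vector space containing a nonzero vector and let λ > 0. Then for every c > 0 there exist Z, Y ∈ H with ‖Z − Y‖ ≤ λ and ‖s^H_λ(Z)‖ > c‖Y‖. -/

import Mathlib

/-- Hard functional thresholding rule: `s^H_λ(Z) = Z` if `‖Z‖ ≥ λ` and `0` otherwise. -/
noncomputable def hardThresh {H : Type*} [NormedAddCommGroup H] [NormedSpace ℝ H]
    (lam : ℝ) (Z : H) : H :=
  if lam ≤ ‖Z‖ then Z else 0

/-! Take `Z` on the threshold sphere `‖Z‖ = λ`, so that `s^H_λ(Z) = Z`, and `Y = Z / (c + 1)`.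
Then `‖Z - Y‖ < λ`, while `c‖Y‖ = c λ / (c + 1) < λ = ‖s^H_λ(Z)‖`: hard thresholding keeps
`Z` at full size although `Y` is as small as we like relative to it. -/

lemma hardThresh_of_le_norm {H : Type*} [NormedAddCommGroup H] [NormedSpace ℝ H]
    {lam : ℝ} {Z : H} (h : lam ≤ ‖Z‖) : hardThresh lam Z = Z :=
  if_pos h

lemma norm_sub_smul_self {E : Type*} [SeminormedAddCommGroup E] [NormedSpace ℝ E]
    (x : E) {t : ℝ} (ht : t ≤ 1) : ‖x - t • x‖ = (1 - t) * ‖x‖ := by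
  rw [← norm_smul_of_nonneg (sub_nonneg.mpr ht), sub_smul, one_smul]

theorem hardThresh_fails_condition_i {H : Type*} [NormedAddCommGroup H] [NormedSpace ℝ H]
    (hH : ∃ v : H, v ≠ 0) (lam : ℝ) (hlam : 0 < lam) :
    ∀ c : ℝ, 0 < c → ∃ Z Y : H, ‖Z - Y‖ ≤ lam ∧ c * ‖Y‖ < ‖hardThresh lam Z‖ := by
  intro c hc
  have : Nontrivial H := let ⟨v, hv⟩ := hH; ⟨⟨v, 0, hv⟩⟩
  obtain ⟨Z, hZ⟩ := exists_norm_eq H hlam.le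
  set t : ℝ := (c + 1)⁻¹
  have ht_pos : 0 < t := by positivity
  have ht_le : t ≤ 1 := inv_le_one_of_one_le₀ (by linarith)
  refine ⟨Z, t • Z, ?_, ?_⟩
  · rw [norm_sub_smul_self Z ht_le, hZ]
    nlinarith
  · rw [hardThresh_of_le_norm hZ.ge, norm_smul, Real.norm_of_nonneg ht_pos.le, hZ]
    calc c * (t * lam) = c / (c + 1) * lam := by ring
      _ < 1 * lam := by gcongr; rw [div_lt_one (by linarith)]; linarith
      _ = lam := one_mul lam
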